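/- arXiv:2303.08251 — 4 statements merged into one kernel-verified Lean document; each statement's English description precedes it below -/
import Mathlib

section
/- For every infinite cardinal θ, the following statements are equivalent: (1) θ < 𝔯; (2) for every singular cardinal κ of countable cofinality and every family A of countably infinite cofinal subsets of κ with |A| ≤ θ, there exists a subset E of κ such that for every a ∈ A, both a ∩ E and a \ E are infinite; (3) there exists a singular cardinal κ of countable cofinality such that for every family A of countably infinite cofinal subsets of κ with |A| ≤ θ, there exists a subset E of κ such that for every a ∈ A, both a ∩ E and a \ E are infinite. -/
open Cardinal Set

/-- The reaping number `𝔯`: the least cardinality of a family `A` of infinite subsets of `ω`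
such that for every infinite `b ⊆ ω` there is `a ∈ A` with `a \ b` or `a ∩ b` finite. -/
noncomputable def reapingNumber : Cardinal.{0} :=
  sInf { c : Cardinal.{0} | ∃ A : Set (Set ℕ),
    #A = c ∧ (∀ a ∈ A, a.Infinite) ∧
    ∀ b : Set ℕ, b.Infinite → ∃ a ∈ A, (a \ b).Finite ∨ (a ∩ b).Finite }

/-- `a` is a countably infinite cofinal subset of the cardinal `κ`
(viewed as a set of ordinals less than `κ.ord`). -/
def IsCtblCofinalSubset (a : Set Ordinal.{0}) (κ : Cardinal.{0}) : Prop :=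
  a.Countable ∧ a.Infinite ∧ a ⊆ Set.Iio κ.ord ∧ sSup a = κ.ord

/-- Every family of at most `θ` many countably infinite cofinal subsets of `κ`
can be split by a single set `E ⊆ κ`. -/
def SplitsFamilies (κ θ : Cardinal.{0}) : Prop :=
  ∀ (ι : Type) (A : ι → Set Ordinal.{0}), #ι ≤ θ →
    (∀ i, IsCtblCofinalSubset (A i) κ) →
    ∃ E : Set Ordinal.{0}, E ⊆ Set.Iio κ.ord ∧
      ∀ i, (A i ∩ E).Infinite ∧ (A i \ E).Infinite

/-- A strictly increasing cofinal `ℕ`-sequence in `κ.ord`, for `κ` of countable cofinality. -/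
lemma exists_cofinal_seq (κ : Cardinal.{0}) (hκ : ℵ₀ ≤ κ) (hcof : κ.ord.cof = ℵ₀) :
    ∃ c : ℕ → Ordinal.{0}, StrictMono c ∧ (∀ n, c n < κ.ord) ∧
      ∀ x, x < κ.ord → ∃ n, x < c n := by
  obtain ⟨ι, f, hlsub, hmk⟩ := Ordinal.exists_lsub_cof κ.ord
  rw [hcof] at hmk
  obtain ⟨e⟩ := Cardinal.eq.mp (hmk.trans Cardinal.mk_nat.symm)
  set g : ℕ → Ordinal := f ∘ e.symm with hg
  have hglt : ∀ n, g n < κ.ord := fun n => hlsub ▸ Ordinal.lt_lsub f _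
  have hgcof : ∀ x, x < κ.ord → ∃ n, x ≤ g n := by
    intro x hx
    rw [← hlsub, Ordinal.lt_lsub_iff] at hx
    obtain ⟨i, hi⟩ := hx
    exact ⟨e i, by simpa [hg] using hi⟩
  set h : ℕ → Ordinal := fun n => Nat.rec (g 0) (fun n ih => max (g (n + 1)) (ih + 1)) n
    with hh
  have hsucc : ∀ n, h (n + 1) = max (g (n + 1)) (h n + 1) := fun n => rfl
  have hmono : StrictMono h := by
    refine strictMono_nat_of_lt_succ fun n => ?_
    rw [hsucc]
    refine lt_of_lt_of_le ?_ (le_max_right _ _)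
    rw [Ordinal.add_one_eq_succ]
    exact Order.lt_succ _
  have hle : ∀ n, g n ≤ h n := by
    intro n
    cases n with
    | zero => exact le_refl _
    | succ n => rw [hsucc]; exact le_max_left _ _
  have hlt : ∀ n, h n < κ.ord := by
    intro n
    induction n with
    | zero => exact hglt 0
    | succ n ih =>
      rw [hsucc]
      refine max_lt (hglt _) ?_
      rw [Ordinal.add_one_eq_succ]
      exact (Cardinal.isSuccLimit_ord hκ).succ_lt ih
  refine ⟨h, hmono, hlt, fun x hx => ?_⟩
  obtain ⟨n, hn⟩ := hgcof x hx
  exact ⟨n + 1, lt_of_le_of_lt (hn.trans (hle n)) (hmono (Nat.lt_succ_self n))⟩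

/-- If some family splitting holds at a suitable `κ`, then `θ < 𝔯`. -/
lemma splits_to_lt (θ κ : Cardinal.{0}) (hκ : ℵ₀ ≤ κ) (hcof : κ.ord.cof = ℵ₀)
    (hsp : SplitsFamilies κ θ) : θ < reapingNumber := by
  by_contra hcon
  have hr : reapingNumber ≤ θ := le_of_not_gt hcon
  -- the defining set is nonempty, so the infimum is attained
  have hne : { c : Cardinal.{0} | ∃ A : Set (Set ℕ),
      #A = c ∧ (∀ a ∈ A, a.Infinite) ∧
      ∀ b : Set ℕ, b.Infinite → ∃ a ∈ A, (a \ b).Finite ∨ (a ∩ b).Finite }.Nonempty := by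
    refine ⟨#({b : Set ℕ | b.Infinite}), {b : Set ℕ | b.Infinite}, rfl, fun a ha => ha,
      fun b hb => ⟨b, hb, Or.inl ?_⟩⟩
    simp
  obtain ⟨F, hFcard, hFinf, hFreap⟩ := csInf_mem hne
  obtain ⟨c, hc, hclt, hccof⟩ := exists_cofinal_seq κ hκ hcof
  set A : ↥F → Set Ordinal.{0} := fun a => c '' (a : Set ℕ) with hA
  have hbdd : ∀ a : ↥F, BddAbove (A a) := by
    rintro a
    exact ⟨κ.ord, by rintro _ ⟨n, _, rfl⟩; exact (hclt n).le⟩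
  have hmem : ∀ a : ↥F, IsCtblCofinalSubset (A a) κ := by
    intro a
    refine ⟨((a : Set ℕ).to_countable).image c,
      (hFinf _ a.2).image (hc.injective.injOn), ?_, ?_⟩
    · rintro _ ⟨n, _, rfl⟩; exact hclt n
    · refine le_antisymm (csSup_le ((hFinf _ a.2).nonempty.image c) ?_) ?_
      · rintro _ ⟨n, _, rfl⟩; exact (hclt n).le
      · by_contra hlt'
        obtain ⟨n, hn⟩ := hccof _ (lt_of_not_ge hlt')
        obtain ⟨m, hm, hnm⟩ := (hFinf _ a.2).exists_gt n
        have : c m ≤ sSup (A a) := le_csSup (hbdd a) ⟨m, hm, rfl⟩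
        exact absurd ((hn.trans_le (hc.monotone hnm.le)).trans_le this) (lt_irrefl _)
  have hcard : #(↥F) ≤ θ := by rw [hFcard]; exact hr
  obtain ⟨E, hE, hsplit⟩ := hsp ↥F A hcard hmem
  set s : Set ℕ := {n | c n ∈ E} with hs
  have hinter : ∀ a : ↥F, c '' ((a : Set ℕ) ∩ s) = A a ∩ E := by
    intro a
    ext y
    constructor
    · rintro ⟨n, ⟨hn, hns⟩, rfl⟩; exact ⟨⟨n, hn, rfl⟩, hns⟩
    · rintro ⟨⟨n, hn, rfl⟩, hyE⟩; exact ⟨n, ⟨hn, hyE⟩, rfl⟩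
  have hdiff : ∀ a : ↥F, c '' ((a : Set ℕ) \ s) = A a \ E := by
    intro a
    ext y
    constructor
    · rintro ⟨n, ⟨hn, hns⟩, rfl⟩; exact ⟨⟨n, hn, rfl⟩, hns⟩
    · rintro ⟨⟨n, hn, rfl⟩, hyE⟩; exact ⟨n, ⟨hn, hyE⟩, rfl⟩
  have hsplit' : ∀ a : ↥F, ((a : Set ℕ) ∩ s).Infinite ∧ ((a : Set ℕ) \ s).Infinite := by
    intro a
    constructor
    · have := (hsplit a).1; rw [← hinter a] at this; exact this.of_image
    · have := (hsplit a).2; rw [← hdiff a] at this; exact this.of_image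
  -- s is infinite
  obtain ⟨a0, ha0, _⟩ := hFreap Set.univ Set.infinite_univ
  have hsinf : s.Infinite :=
    ((hsplit' ⟨a0, ha0⟩).1).mono (Set.inter_subset_right)
  obtain ⟨a, haF, hor⟩ := hFreap s hsinf
  rcases hor with h1 | h2
  · exact h1.not_infinite (hsplit' ⟨a, haF⟩).2
  · exact h2.not_infinite (hsplit' ⟨a, haF⟩).1

/-- If `θ < 𝔯` then families split at every suitable `κ`. -/
lemma lt_to_splits (θ κ : Cardinal.{0}) (hκ : ℵ₀ ≤ κ) (hcof : κ.ord.cof = ℵ₀)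
    (hθr : θ < reapingNumber) : SplitsFamilies κ θ := by
  intro ι A hι hA
  obtain ⟨c, hc, hclt, hccof⟩ := exists_cofinal_seq κ hκ hcof
  set b : ι → Set ℕ := fun i => {n | (A i ∩ Set.Ico (c n) (c (n + 1))).Nonempty} with hb
  have hdisj : ∀ (x : Ordinal) (n m : ℕ),
      x ∈ Set.Ico (c n) (c (n + 1)) → x ∈ Set.Ico (c m) (c (m + 1)) → n = m := by
    intro x n m hn hm
    rcases lt_trichotomy n m with h | h | h
    · exact absurd ((hn.2.trans_le (hc.monotone h)).trans_le hm.1) (lt_irrefl _)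
    · exact h
    · exact absurd ((hm.2.trans_le (hc.monotone h)).trans_le hn.1) (lt_irrefl _)
  have hcov : ∀ x : Ordinal, x < κ.ord → c 0 ≤ x →
      ∃ n, x ∈ Set.Ico (c n) (c (n + 1)) := by
    intro x hx h0
    have hex : ∃ n, x < c n := hccof x hx
    set n0 := Nat.find hex with hn0
    have hspec : x < c n0 := Nat.find_spec hex
    have hpos : 0 < n0 := by
      rcases Nat.eq_zero_or_pos n0 with h | h
      · exact absurd (h ▸ hspec) (not_lt.2 h0)
      · exact h
    refine ⟨n0 - 1, ?_, ?_⟩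
    · have := Nat.find_min hex (Nat.sub_lt hpos one_pos)
      exact not_lt.1 this
    · have heq : n0 - 1 + 1 = n0 := by omega
      rw [heq]; exact hspec
  have hbinf : ∀ i, (b i).Infinite := by
    intro i
    by_contra hfin
    rw [Set.not_infinite] at hfin
    obtain ⟨N, hN⟩ := hfin.bddAbove
    have hub : ∀ x ∈ A i, x < c (N + 1) := by
      intro x hx
      have hxlt : x < κ.ord := (hA i).2.2.1 hx
      rcases lt_or_ge x (c 0) with h0 | h0
      · exact h0.trans_le (hc.monotone (Nat.zero_le _))
      · obtain ⟨n, hn⟩ := hcov x hxlt h0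
        have hnb : n ∈ b i := ⟨x, hx, hn⟩
        have : n ≤ N := hN hnb
        exact hn.2.trans_le (hc.monotone (by omega))
    have h1 : sSup (A i) ≤ c (N + 1) :=
      csSup_le ((hA i).2.1.nonempty) fun x hx => (hub x hx).le
    rw [(hA i).2.2.2] at h1
    exact absurd h1 (not_le.2 (hclt (N + 1)))
  have key : ∃ s : Set ℕ, ∀ i, (b i ∩ s).Infinite ∧ (b i \ s).Infinite := by
    by_contra hcon
    push_neg at hcon
    have hle : reapingNumber ≤ #(Set.range b) := by
      refine csInf_le' ⟨Set.range b, rfl, ?_, ?_⟩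
      · rintro _ ⟨i, rfl⟩; exact hbinf i
      · intro t _
        obtain ⟨i, hi⟩ := hcon t
        refine ⟨b i, Set.mem_range_self i, ?_⟩
        by_cases h1 : (b i ∩ t).Infinite
        · exact Or.inl (hi h1)
        · exact Or.inr (Set.not_infinite.1 h1)
    exact absurd hθr (not_lt.2 (hle.trans ((Cardinal.mk_range_le).trans hι)))
  obtain ⟨s, hs⟩ := key
  refine ⟨⋃ n ∈ s, Set.Ico (c n) (c (n + 1)), ?_, ?_⟩
  · intro x hx
    simp only [Set.mem_iUnion] at hx
    obtain ⟨n, _, hn⟩ := hx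
    exact hn.2.trans (hclt (n + 1))
  · intro i
    constructor
    · have : (b i ∩ s).Infinite := (hs i).1
      have hinst : Infinite ↥(b i ∩ s) := this.to_subtype
      refine Set.infinite_of_injective_forall_mem
        (f := fun p : ↥(b i ∩ s) =>
          (show (A i ∩ Set.Ico (c p.1) (c (p.1 + 1))).Nonempty from p.2.1).choose) ?_ ?_
      · intro p q hpq
        have hp := (show (A i ∩ Set.Ico (c p.1) (c (p.1 + 1))).Nonempty from p.2.1).choose_spec
        have hq := (show (A i ∩ Set.Ico (c q.1) (c (q.1 + 1))).Nonempty from q.2.1).choose_spec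
        beta_reduce at hpq
        rw [hpq] at hp
        exact Subtype.ext (hdisj _ _ _ hp.2 hq.2)
      · intro p
        have hp := (show (A i ∩ Set.Ico (c p.1) (c (p.1 + 1))).Nonempty from p.2.1).choose_spec
        refine ⟨hp.1, ?_⟩
        simp only [Set.mem_iUnion]
        exact ⟨p.1, p.2.2, hp.2⟩
    · have : (b i \ s).Infinite := (hs i).2
      have hinst : Infinite ↥(b i \ s) := this.to_subtype
      refine Set.infinite_of_injective_forall_mem
        (f := fun p : ↥(b i \ s) =>
          (show (A i ∩ Set.Ico (c p.1) (c (p.1 + 1))).Nonempty from p.2.1).choose) ?_ ?_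
      · intro p q hpq
        have hp := (show (A i ∩ Set.Ico (c p.1) (c (p.1 + 1))).Nonempty from p.2.1).choose_spec
        have hq := (show (A i ∩ Set.Ico (c q.1) (c (q.1 + 1))).Nonempty from q.2.1).choose_spec
        beta_reduce at hpq
        rw [hpq] at hp
        exact Subtype.ext (hdisj _ _ _ hp.2 hq.2)
      · intro p
        have hp := (show (A i ∩ Set.Ico (c p.1) (c (p.1 + 1))).Nonempty from p.2.1).choose_spec
        refine ⟨hp.1, ?_⟩
        intro hmem
        simp only [Set.mem_iUnion] at hmem
        obtain ⟨m, hms, hm⟩ := hmem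
        exact p.2.2 ((hdisj _ _ _ hp.2 hm) ▸ hms)

theorem stmt0 (θ : Cardinal.{0}) (hθ : ℵ₀ ≤ θ) :
    ((θ < reapingNumber) ↔
      (∀ κ : Cardinal.{0}, ℵ₀ ≤ κ → ¬ κ.IsRegular → κ.ord.cof = ℵ₀ →
        SplitsFamilies κ θ)) ∧
    ((θ < reapingNumber) ↔
      (∃ κ : Cardinal.{0}, (ℵ₀ ≤ κ ∧ ¬ κ.IsRegular ∧ κ.ord.cof = ℵ₀) ∧
        SplitsFamilies κ θ)) := by
  have hwit1 : ℵ₀ ≤ ℵ_ Ordinal.omega0 := aleph0_le_aleph _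
  have hwit3 : (ℵ_ Ordinal.omega0).ord.cof = ℵ₀ :=
    (show (ℵ_ Ordinal.omega0).ord.cof = Ordinal.omega0.cof by rw [Cardinal.ord_aleph]; exact Ordinal.cof_omega Ordinal.isSuccLimit_omega0).trans Ordinal.cof_omega0
  have hwit2 : ¬ (ℵ_ Ordinal.omega0).IsRegular := by
    intro h
    have h1 : ℵ_ Ordinal.omega0 ≤ ℵ₀ := h.2.trans_eq hwit3
    have h2 : ℵ₀ < ℵ_ Ordinal.omega0 := by
      rw [← Cardinal.aleph_zero]
      exact Cardinal.aleph_lt_aleph.2 Ordinal.omega0_pos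
    exact absurd h1 (not_le.2 h2)
  constructor
  · constructor
    · intro h κ hκ _ hcof
      exact lt_to_splits θ κ hκ hcof h
    · intro h
      exact splits_to_lt θ _ hwit1 hwit3 (h _ hwit1 hwit2 hwit3)
  · constructor
    · intro h
      exact ⟨ℵ_ Ordinal.omega0, ⟨hwit1, hwit2, hwit3⟩,
        lt_to_splits θ _ hwit1 hwit3 h⟩
    · rintro ⟨κ, ⟨hκ, _, hcof⟩, hsp⟩
      exact splits_to_lt θ κ hκ hcof hsp
end

section
/- For every singular cardinal κ of countable cofinality, there exists a family 𝒜 of countably infinite subsets of κ, each of which is cofinal in κ, such that distinct members of 𝒜 have finite intersection and 𝒜 has cardinality κ^{ℵ₀}. -/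
open Cardinal Set

noncomputable def adJle {a b : Cardinal.{0}} (h : a ≤ b) : a.out ↪ b.out :=
  (Cardinal.out_embedding.mp h).some

noncomputable def adLam (e : ℕ → Ordinal.{0}) : ℕ → Cardinal.{0}
  | 0 => ℵ₀
  | n + 1 => Order.succ (adLam e n ⊔ (e n).card)

lemma adLam_aleph0_le (e : ℕ → Ordinal.{0}) : ∀ n, ℵ₀ ≤ adLam e n := by
  intro n
  induction n with
  | zero => exact le_rfl
  | succ n ih =>
      exact ih.trans ((le_sup_left).trans (Order.le_succ _))

lemma adLam_strictMono (e : ℕ → Ordinal.{0}) : StrictMono (adLam e) := by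
  apply strictMono_nat_of_lt_succ
  intro n
  exact lt_of_le_of_lt le_sup_left (Order.lt_succ _)

lemma adLam_card_lt (e : ℕ → Ordinal.{0}) (n : ℕ) : (e n).card < adLam e (n + 1) :=
  lt_of_le_of_lt le_sup_right (Order.lt_succ _)

lemma ad_mk_Ico {a b : Cardinal.{0}} (hab : a < b) (hb : ℵ₀ ≤ b) :
    Cardinal.lift.{1} b ≤ #(↥(Set.Ico a.ord b.ord)) := by
  by_contra hc
  push_neg at hc
  have hsub : Set.Iio b.ord ⊆ Set.Iio a.ord ∪ Set.Ico a.ord b.ord := by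
    intro x hx
    by_cases h : x < a.ord
    · exact Or.inl h
    · exact Or.inr ⟨not_lt.mp h, hx⟩
  have h2 : #(Set.Iio b.ord) = Cardinal.lift.{1} b := by
    rw [Ordinal.mk_Iio_ordinal, Cardinal.card_ord]
  have h3 : #(Set.Iio a.ord) = Cardinal.lift.{1} a := by
    rw [Ordinal.mk_Iio_ordinal, Cardinal.card_ord]
  have h4 : Cardinal.lift.{1} b ≤ #(Set.Iio a.ord) + #(Set.Ico a.ord b.ord) := by
    calc Cardinal.lift.{1} b = #(Set.Iio b.ord) := h2.symm
      _ ≤ #((Set.Iio a.ord ∪ Set.Ico a.ord b.ord : Set Ordinal)) :=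
          Cardinal.mk_le_mk_of_subset hsub
      _ ≤ #(Set.Iio a.ord) + #(Set.Ico a.ord b.ord) := Cardinal.mk_union_le _ _
  have h5 : #(Set.Iio a.ord) + #(Set.Ico a.ord b.ord) < Cardinal.lift.{1} b := by
    apply Cardinal.add_lt_of_lt (Cardinal.aleph0_le_lift.mpr hb)
    · rw [h3]; exact Cardinal.lift_lt.mpr hab
    · exact hc
  exact absurd h4 (not_le.mpr h5)

theorem stmt3 (κ : Cardinal.{0}) (h1 : ℵ₀ ≤ κ) (h2 : ¬ κ.IsRegular)
    (h3 : κ.ord.cof = ℵ₀) :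
    ∃ (ι : Type) (A : ι → Set Ordinal.{0}),
      Function.Injective A ∧ #ι = κ ^ ℵ₀ ∧
      (∀ i, (A i).Countable ∧ (A i).Infinite ∧ A i ⊆ Set.Iio κ.ord ∧
        sSup (A i) = κ.ord) ∧
      ∀ i j, i ≠ j → (A i ∩ A j).Finite := by
  classical
  have haleph : ℵ₀ < κ := h1.lt_of_ne (fun h => h2 (h ▸ Cardinal.isRegular_aleph0))
  have hlimit : ∀ μ, μ < κ → Order.succ μ < κ := by
    intro μ hμ
    rcases lt_or_ge μ ℵ₀ with h | h
    · exact lt_of_le_of_lt (Order.succ_le_of_lt h) haleph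
    · by_contra hcon
      push_neg at hcon
      have : κ = Order.succ μ := le_antisymm hcon (Order.succ_le_of_lt hμ)
      exact h2 (this ▸ Cardinal.isRegular_succ h)
  obtain ⟨σ, e0, hlsub, hσ⟩ := Ordinal.exists_lsub_cof κ.ord
  rw [h3] at hσ
  obtain ⟨eqv⟩ : Nonempty (ℕ ≃ σ) := by
    rw [← Cardinal.eq, Cardinal.mk_nat, hσ]
  set e : ℕ → Ordinal.{0} := fun n => e0 (eqv n) with he
  set lam : ℕ → Cardinal.{0} := adLam e with hlam
  have hmono : StrictMono lam := adLam_strictMono e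
  have hal : ∀ n, ℵ₀ ≤ lam n := adLam_aleph0_le e
  have hlt : ∀ n, lam n < κ := by
    intro n
    induction n with
    | zero => exact haleph
    | succ n ih =>
        have hen : (e n).card < κ := by
          rw [← Cardinal.lt_ord]
          rw [← hlsub]
          exact Ordinal.lt_lsub e0 (eqv n)
        have hsup : lam n ⊔ (e n).card < κ := sup_lt_iff.mpr ⟨ih, hen⟩
        have heq : lam (n + 1) = Order.succ (lam n ⊔ (e n).card) := rfl
        rw [heq]
        exact hlimit _ hsup
  have hcof : ∀ β, β < κ.ord → ∃ n, β < (lam n).ord := by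
    intro β hβ
    rw [← hlsub, Ordinal.lt_lsub_iff] at hβ
    obtain ⟨i, hi⟩ := hβ
    refine ⟨eqv.symm i + 1, ?_⟩
    have h1 : e (eqv.symm i) = e0 i := by simp [he]
    have h2 : (e (eqv.symm i)).card < lam (eqv.symm i + 1) := adLam_card_lt e _
    have : e0 i < (lam (eqv.symm i + 1)).ord := by
      rw [Cardinal.lt_ord, ← h1]; exact h2
    exact lt_of_le_of_lt hi this
  -- index type
  set ι : Type := ∀ n : ℕ, (lam n).out with hι
  -- node embeddings
  have hnode : ∀ n : ℕ, Nonempty ((∀ m : Fin (n + 1), (lam m).out) ↪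
      ↥(Set.Ico ((lam n).ord) ((lam (n + 1)).ord))) := by
    intro n
    rw [← Cardinal.lift_mk_le']
    have hb1 : #(∀ m : Fin (n + 1), (lam m).out) ≤ lam n := by
      have emb : (∀ m : Fin (n + 1), (lam m).out) ↪ (Fin (n + 1) → (lam n).out) :=
        Function.Embedding.piCongrRight fun m =>
          adJle (hmono.monotone (Nat.le_of_lt_succ m.isLt))
      calc #(∀ m : Fin (n + 1), (lam m).out) ≤ #(Fin (n + 1) → (lam n).out) :=
            Cardinal.mk_le_of_injective emb.injective
        _ = (lam n) ^ ((n + 1 : ℕ) : Cardinal) := by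
            rw [← Cardinal.power_def, Cardinal.mk_out, Cardinal.mk_fin]
        _ = lam n := Cardinal.power_nat_eq (hal n) (Nat.succ_le_succ (Nat.zero_le n))
    calc Cardinal.lift.{1} #(∀ m : Fin (n + 1), (lam m).out)
        ≤ Cardinal.lift.{1} (lam (n + 1)) := by
          apply Cardinal.lift_le.mpr
          exact hb1.trans (hmono (Nat.lt_succ_self n)).le
      _ ≤ #(↥(Set.Ico ((lam n).ord) ((lam (n + 1)).ord))) :=
          ad_mk_Ico (hmono (Nat.lt_succ_self n)) (hal (n + 1))
      _ = Cardinal.lift.{0} #(↥(Set.Ico ((lam n).ord) ((lam (n + 1)).ord))) :=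
          (Cardinal.lift_uzero _).symm
  set Cemb : ∀ n : ℕ, ((∀ m : Fin (n + 1), (lam m).out) ↪
      ↥(Set.Ico ((lam n).ord) ((lam (n + 1)).ord))) := fun n => (hnode n).some with hCemb
  set g : ι → ℕ → Ordinal.{0} := fun f n => ((Cemb n) (fun m => f m)).val with hg
  have hgIco : ∀ (f : ι) (n : ℕ),
      g f n ∈ Set.Ico ((lam n).ord) ((lam (n + 1)).ord) := fun f n => ((Cemb n) _).2
  have hglt : ∀ (f : ι) (n : ℕ), g f n < κ.ord := by
    intro f n
    exact lt_of_lt_of_le (hgIco f n).2 (Cardinal.ord_le_ord.mpr (hlt (n + 1)).le)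
  have hgmono : ∀ f : ι, StrictMono (g f) := by
    intro f
    intro n m hnm
    calc g f n < (lam (n + 1)).ord := (hgIco f n).2
      _ ≤ (lam m).ord := Cardinal.ord_le_ord.mpr (hmono.monotone hnm)
      _ ≤ g f m := (hgIco f m).1
  have hlevel : ∀ (f f' : ι) (n m : ℕ), g f n = g f' m → n = m := by
    intro f f' n m hnm
    by_contra hne
    rcases Nat.lt_or_ge n m with h | h
    · have : g f n < g f' m :=
        lt_of_lt_of_le (hgIco f n).2
          ((Cardinal.ord_le_ord.mpr (hmono.monotone h)).trans (hgIco f' m).1)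
      exact absurd hnm this.ne
    · have h' : m < n := by omega
      have : g f' m < g f n :=
        lt_of_lt_of_le (hgIco f' m).2
          ((Cardinal.ord_le_ord.mpr (hmono.monotone h')).trans (hgIco f n).1)
      exact absurd hnm this.ne'
  have hnodeEq : ∀ (f f' : ι) (n : ℕ), g f n = g f' n →
      ∀ k : ℕ, k < n + 1 → f k = f' k := by
    intro f f' n hff k hk
    have := (Cemb n).injective (Subtype.val_injective hff)
    exact congrFun this ⟨k, hk⟩
  set A : ι → Set Ordinal.{0} := fun f => Set.range (g f) with hA
  -- main claims
  refine ⟨ι, A, ?_, ?_, ?_, ?_⟩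
  · -- injectivity
    intro f f' hff
    funext n
    have h1 : g f n ∈ A f' := hff ▸ Set.mem_range_self n
    obtain ⟨m, hm⟩ := h1
    have hmn : m = n := hlevel f' f m n hm
    subst hmn
    exact hnodeEq f f' m hm.symm m (Nat.lt_succ_self m)
  · -- cardinality
    have hle : #ι ≤ κ ^ ℵ₀ := by
      rw [← Cardinal.mk_out κ, ← Cardinal.mk_nat, Cardinal.power_def]
      have emb : ι ↪ (ℕ → κ.out) :=
        ⟨fun f n => adJle (hlt n).le (f n), by
          intro f f' hff
          funext n
          exact (adJle (hlt n).le).injective (congrFun hff n)⟩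
      exact Cardinal.mk_le_of_injective emb.injective
    have hge : κ ^ ℵ₀ ≤ #ι := by
      rw [← Cardinal.mk_out κ, ← Cardinal.mk_nat, Cardinal.power_def]
      -- embedding κ.out ↪ Iio κ.ord
      have hemb0 : Nonempty (κ.out ↪ ↥(Set.Iio κ.ord)) := by
        rw [← Cardinal.lift_mk_le']
        rw [Ordinal.mk_Iio_ordinal, Cardinal.card_ord, Cardinal.mk_out,
          Cardinal.lift_uzero]
      obtain ⟨emb0⟩ := hemb0
      -- embeddings Iio (lam n).ord ↪ (lam n).out
      have hembn : ∀ n : ℕ, Nonempty (↥(Set.Iio ((lam n).ord)) ↪ (lam n).out) := by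
        intro n
        rw [← Cardinal.lift_mk_le']
        rw [Ordinal.mk_Iio_ordinal, Cardinal.card_ord, Cardinal.mk_out,
          Cardinal.lift_uzero]
      set embn : ∀ n : ℕ, (↥(Set.Iio ((lam n).ord)) ↪ (lam n).out) :=
        fun n => (hembn n).some with hembn'
      have hzero : ∀ n : ℕ, (0 : Ordinal) < (lam n).ord := by
        intro n
        rw [Cardinal.lt_ord, Ordinal.card_zero]
        exact lt_of_lt_of_le Cardinal.aleph0_pos (hal n)
      -- P : Iio κ.ord → ι, injective
      set P : ↥(Set.Iio κ.ord) → ι := fun β n =>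
        if h : β.val < (lam n).ord then embn n ⟨β.val, h⟩ else embn n ⟨0, hzero n⟩
        with hP
      have hPinj : Function.Injective P := by
        intro β γ hβγ
        obtain ⟨n1, hn1⟩ := hcof β.val β.2
        obtain ⟨n2, hn2⟩ := hcof γ.val γ.2
        set n := max n1 n2
        have hβn : β.val < (lam n).ord :=
          lt_of_lt_of_le hn1 (Cardinal.ord_le_ord.mpr (hmono.monotone (le_max_left _ _)))
        have hγn : γ.val < (lam n).ord :=
          lt_of_lt_of_le hn2 (Cardinal.ord_le_ord.mpr (hmono.monotone (le_max_right _ _)))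
        have := congrFun hβγ n
        rw [hP] at this
        simp only [hβn, hγn, dif_pos] at this
        have h2 := (embn n).injective this
        exact Subtype.ext (Subtype.mk_eq_mk.mp h2)
      -- Q : (ℕ → κ.out) → ι
      set Q : (ℕ → κ.out) → ι := fun H m =>
        adJle (hmono.monotone (Nat.unpair_left_le m))
          (P (emb0 (H (Nat.unpair m).2)) (Nat.unpair m).1) with hQ
      have hQinj : Function.Injective Q := by
        intro H H' hHH
        have hkey : ∀ m : ℕ, P (emb0 (H (Nat.unpair m).2)) (Nat.unpair m).1 =
            P (emb0 (H' (Nat.unpair m).2)) (Nat.unpair m).1 := by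
          intro m
          exact (adJle (hmono.monotone (Nat.unpair_left_le m))).injective
            (congrFun hHH m)
        funext k
        apply emb0.injective
        apply hPinj
        funext n
        have h := hkey (Nat.pair n k)
        revert h
        rw [Nat.unpair_pair]
        exact id
      exact Cardinal.mk_le_of_injective hQinj
    exact le_antisymm hle hge
  · -- properties of each A i
    intro f
    have hbdd : BddAbove (Set.range (g f)) := ⟨κ.ord, by
      rintro x ⟨n, rfl⟩
      exact (hglt f n).le⟩
    refine ⟨Set.countable_range _, Set.infinite_range_of_injective (hgmono f).injective,
      ?_, ?_⟩
    · rintro x ⟨n, rfl⟩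
      exact hglt f n
    · have hsup : sSup (A f) = ⨆ n, g f n := rfl
      rw [hsup]
      apply le_antisymm
      · exact ciSup_le fun n => (hglt f n).le
      · apply le_of_forall_lt
        intro β hβ
        obtain ⟨n, hn⟩ := hcof β hβ
        exact lt_of_lt_of_le (lt_of_lt_of_le hn (hgIco f n).1) (le_ciSup hbdd n)
  · -- almost disjoint
    intro f f' hff
    obtain ⟨n₀, hn₀⟩ : ∃ n, f n ≠ f' n := by
      by_contra hcon
      push_neg at hcon
      exact hff (funext hcon)
    apply Set.Finite.subset ((Set.finite_Iio n₀).image (g f))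
    rintro x ⟨⟨n, rfl⟩, ⟨m, hm⟩⟩
    have hmn : m = n := hlevel f' f m n hm
    subst hmn
    refine ⟨m, ?_, rfl⟩
    simp only [Set.mem_Iio]
    by_contra hge
    push_neg at hge
    exact hn₀ (hnodeEq f f' m hm.symm n₀ (by omega))
end

section
/- Let κ be a cardinal of uncountable cofinality λ, let ⟨C_ξ : ξ < λ⟩ be a sequence of closed unbounded subsets of κ, and let S be a subset of κ such that S ∩ C_ξ is unbounded in κ for every ξ < λ. Then there exists a partition ⟨S_η : η < λ⟩ of S into pairwise disjoint sets with union S such that S_η ∩ C_ξ ≠ ∅ for all η, ξ < λ. -/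
open Cardinal Set

/-- `C` is a closed unbounded (club) subset of the ordinal `κ`. -/
def IsClubIn (C : Set Ordinal.{0}) (κ : Ordinal.{0}) : Prop :=
  C ⊆ Set.Iio κ ∧ (∀ α < κ, ∃ β ∈ C, α < β) ∧
  ∀ s ⊆ C, s.Nonempty → sSup s < κ → sSup s ∈ C

noncomputable def seqX (g : Ordinal.{0} → Ordinal.{0} → Ordinal.{0}) : Ordinal.{0} → Ordinal.{0} :=
  Ordinal.lt_wf.fix fun i ih => g i (Ordinal.blsub i fun j hj => ih j hj)

theorem seqX_eq (g : Ordinal.{0} → Ordinal.{0} → Ordinal.{0}) (i : Ordinal) :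
    seqX g i = g i (Ordinal.blsub i fun j _ => seqX g j) := by
  rw [seqX, WellFounded.fix_eq]

theorem stmt5 (κ : Cardinal.{0}) (hcof : ℵ₀ < κ.ord.cof)
    (C : Ordinal.{0} → Set Ordinal.{0})
    (hclub : ∀ ξ < κ.ord.cof.ord, IsClubIn (C ξ) κ.ord)
    (S : Set Ordinal.{0}) (hS : S ⊆ Set.Iio κ.ord)
    (hmeet : ∀ ξ < κ.ord.cof.ord, ∀ α < κ.ord, ∃ β ∈ S ∩ C ξ, α < β) :
    ∃ T : Ordinal.{0} → Set Ordinal.{0},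
      (∀ η < κ.ord.cof.ord, T η ⊆ S) ∧
      (∀ η < κ.ord.cof.ord, ∀ η' < κ.ord.cof.ord, η ≠ η' →
        Disjoint (T η) (T η')) ∧
      (⋃ η ∈ Set.Iio κ.ord.cof.ord, T η) = S ∧
      (∀ η < κ.ord.cof.ord, ∀ ξ < κ.ord.cof.ord, (T η ∩ C ξ).Nonempty) := by
  classical
  set L : Ordinal.{0} := κ.ord.cof.ord with hLdef
  have hL0 : (0 : Ordinal) < L := by
    rw [hLdef, ← Cardinal.ord_zero]
    exact Cardinal.ord_lt_ord.2 (lt_trans Cardinal.aleph0_pos hcof)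
  -- a pairing equivalence
  have hcard : #(Set.Iio L × Set.Iio L) = #(Set.Iio L) := by
    rw [Cardinal.mk_prod, Cardinal.lift_id, Ordinal.mk_Iio_ordinal, hLdef, Cardinal.card_ord]
    exact Cardinal.mul_eq_self (by
      rw [← Cardinal.lift_aleph0.{1,0}]
      exact Cardinal.lift_le.2 hcof.le)
  obtain ⟨e⟩ := Cardinal.eq.1 hcard
  set P : Ordinal → Ordinal × Ordinal := fun i =>
    if h : i < L then (((e.symm ⟨i, h⟩).1 : Ordinal), ((e.symm ⟨i, h⟩).2 : Ordinal))
    else (0, 0) with hPdef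
  have hP1 : ∀ i, i < L → (P i).1 < L := by
    intro i h; simp only [hPdef, dif_pos h]; exact (e.symm ⟨i, h⟩).1.2
  have hP2 : ∀ i, i < L → (P i).2 < L := by
    intro i h; simp only [hPdef, dif_pos h]; exact (e.symm ⟨i, h⟩).2.2
  have hPe : ∀ η, η < L → ∀ ξ, ξ < L → ∃ i, ∃ _ : i < L, P i = (η, ξ) := by
    intro η hη ξ hξ
    refine ⟨(e (⟨η, hη⟩, ⟨ξ, hξ⟩) : Ordinal), (e (⟨η, hη⟩, ⟨ξ, hξ⟩)).2, ?_⟩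
    simp only [hPdef, dif_pos (e (⟨η, hη⟩, ⟨ξ, hξ⟩)).2, Subtype.coe_eta,
      Equiv.symm_apply_apply]
    rw [dif_pos (show ((e (⟨η, hη⟩, ⟨ξ, hξ⟩) : Ordinal) < L) from (e (⟨η, hη⟩, ⟨ξ, hξ⟩)).2)]
    simp only [Subtype.coe_eta, Equiv.symm_apply_apply]
  set g : Ordinal → Ordinal → Ordinal := fun i b =>
    if h : ∃ β ∈ S ∩ C ((P i).2), b < β then h.choose else 0 with hgdef
  set x : Ordinal → Ordinal := seqX g with hxdef
  -- key facts about x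
  have key : ∀ i, i < L → x i ∈ S ∩ C ((P i).2) ∧
      (Ordinal.blsub i fun j _ => x j) < x i := by
    intro i
    induction i using Ordinal.induction with
    | h i IH =>
      intro hi
      have hb : (Ordinal.blsub i fun j _ => x j) < κ.ord := by
        refine Ordinal.blsub_lt_ord ?_ ?_
        · exact Cardinal.lt_ord.1 hi
        · intro j hj
          exact hS ((IH j hj (hj.trans hi)).1.1)
      have hex : ∃ β ∈ S ∩ C ((P i).2), (Ordinal.blsub i fun j _ => x j) < β :=
        hmeet _ (hP2 i hi) _ hb
      have hx : x i = g i (Ordinal.blsub i fun j _ => x j) := seqX_eq g i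
      simp only [hgdef] at hx
      rw [dif_pos hex] at hx
      rw [hx]
      exact ⟨hex.choose_spec.1, hex.choose_spec.2⟩
  have mono : ∀ j i, j < i → i < L → x j < x i := by
    intro j i hji hi
    exact lt_trans (Ordinal.lt_blsub (fun j _ => x j) j hji) (key i hi).2
  have inj : ∀ i i', i < L → i' < L → x i = x i' → i = i' := by
    intro i i' hi hi' hx
    rcases lt_trichotomy i i' with h | h | h
    · exact absurd hx (ne_of_lt (mono i i' h hi'))
    · exact h
    · exact absurd hx.symm (ne_of_lt (mono i' i h hi))
  -- the partition
  set T : Ordinal → Set Ordinal := fun η =>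
    if η = 0 then S \ {β | ∃ i, ∃ _ : i < L, (P i).1 ≠ 0 ∧ x i = β}
    else {β | ∃ i, ∃ _ : i < L, (P i).1 = η ∧ x i = β} with hTdef
  have hTsub : ∀ η, η < L → T η ⊆ S := by
    intro η hη β hβ
    simp only [hTdef] at hβ
    by_cases h0 : η = 0
    · rw [if_pos h0] at hβ; exact hβ.1
    · rw [if_neg h0] at hβ
      obtain ⟨i, hi, _, hxi⟩ := hβ
      exact hxi ▸ (key i hi).1.1
  refine ⟨T, hTsub, ?_, ?_, ?_⟩
  · -- disjointness
    intro η hη η' hη' hne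
    rw [Set.disjoint_left]
    intro β hβ hβ'
    simp only [hTdef] at hβ hβ'
    by_cases h0 : η = 0
    · have h0' : η' ≠ 0 := fun h => hne (h0.trans h.symm)
      rw [if_pos h0] at hβ
      rw [if_neg h0'] at hβ'
      obtain ⟨i, hi, hne', hxi⟩ := hβ'
      exact hβ.2 ⟨i, hi, fun h => h0' (hne' ▸ h ▸ rfl), hxi⟩
    · by_cases h0' : η' = 0
      · rw [if_pos h0'] at hβ'
        rw [if_neg h0] at hβ
        obtain ⟨i, hi, hne', hxi⟩ := hβ
        exact hβ'.2 ⟨i, hi, fun h => h0 (hne' ▸ h ▸ rfl), hxi⟩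
      · rw [if_neg h0] at hβ
        rw [if_neg h0'] at hβ'
        obtain ⟨i, hi, hfst, hxi⟩ := hβ
        obtain ⟨i', hi', hfst', hxi'⟩ := hβ'
        have : i = i' := inj i i' hi hi' (by rw [hxi, hxi'])
        exact hne (hfst ▸ hfst' ▸ this ▸ rfl)
  · -- union
    apply Set.Subset.antisymm
    · exact Set.iUnion₂_subset hTsub
    · intro s hs
      rw [Set.mem_iUnion₂]
      by_cases hc : ∃ i, ∃ _ : i < L, (P i).1 ≠ 0 ∧ x i = s
      · obtain ⟨i, hi, hne, hxi⟩ := hc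
        refine ⟨(P i).1, hP1 i hi, ?_⟩
        simp only [hTdef, if_neg hne]
        exact ⟨i, hi, rfl, hxi⟩
      · refine ⟨0, hL0, ?_⟩
        simp only [hTdef, if_pos rfl]
        exact ⟨hs, hc⟩
  · -- meeting every club
    intro η hη ξ hξ
    obtain ⟨i, hi, hPi⟩ := hPe η hη ξ hξ
    have hxC : x i ∈ C ξ := by
      have := (key i hi).1.2
      rwa [hPi] at this
    have hxT : x i ∈ T η := by
      simp only [hTdef]
      by_cases h0 : η = 0
      · rw [if_pos h0]
        refine ⟨(key i hi).1.1, ?_⟩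
        rintro ⟨i', hi', hne', hxi'⟩
        have : i' = i := inj i' i hi' hi hxi'
        apply hne'
        rw [this, hPi, h0]
      · rw [if_neg h0]
        exact ⟨i, hi, by rw [hPi], rfl⟩
    exact ⟨x i, hxT, hxC⟩
end

section
/- Let κ be a singular cardinal of countable cofinality and let 𝒞 be a family of closed unbounded subsets of κ with |𝒞| < 𝔯. Then there exists a subset E of κ such that for every C ∈ 𝒞, both C ∩ E and C \ E are infinite; in particular, both E and κ \ E meet every member of 𝒞. -/
open Cardinal Set

/-- A set of naturals that is unbounded above is infinite. -/
lemma infinite_of_unbounded_nat {s : Set ℕ} (h : ∀ N, ∃ n ∈ s, N ≤ n) : s.Infinite := by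
  intro hfin
  obtain ⟨m, hm⟩ := hfin.bddAbove
  obtain ⟨n, hn, hn'⟩ := h (m + 1)
  exact absurd (hm hn) (by omega)

theorem stmt6 (κ : Cardinal.{0}) (h1 : ℵ₀ ≤ κ) (h2 : ¬ κ.IsRegular)
    (h3 : κ.ord.cof = ℵ₀)
    (ι : Type) (𝒞 : ι → Set Ordinal.{0}) (hι : #ι < reapingNumber)
    (hclub : ∀ i, IsClubIn (𝒞 i) κ.ord) :
    ∃ E : Set Ordinal.{0}, E ⊆ Set.Iio κ.ord ∧
      (∀ i, (𝒞 i ∩ E).Infinite ∧ (𝒞 i \ E).Infinite) ∧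
      (∀ i, (𝒞 i ∩ E).Nonempty ∧ (𝒞 i ∩ (Set.Iio κ.ord \ E)).Nonempty) := by
  have hlim : Order.IsSuccLimit κ.ord := Cardinal.isSuccLimit_ord h1
  -- a cofinal ω-sequence
  obtain ⟨ι', f, hf, hι'⟩ := Ordinal.exists_lsub_cof κ.ord
  rw [h3, ← Cardinal.mk_nat, Cardinal.eq] at hι'
  obtain ⟨e⟩ := hι'
  set g : ℕ → Ordinal.{0} := f ∘ e.symm with hg
  have hglt : ∀ n, g n < κ.ord := fun n => hf ▸ Ordinal.lt_lsub f _
  have hgcof : ∀ β < κ.ord, ∃ n, β ≤ g n := by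
    intro β hβ
    rw [← hf, Ordinal.lt_lsub_iff] at hβ
    obtain ⟨i, hi⟩ := hβ
    exact ⟨e i, by simpa [hg] using hi⟩
  -- a strictly increasing cofinal ω-sequence starting at 0
  set α : ℕ → Ordinal.{0} := fun n => Nat.rec 0 (fun n a => (max a (g n)) + 1) n with hα
  have hαsucc : ∀ n, α (n + 1) = max (α n) (g n) + 1 := fun n => rfl
  have hαlt : ∀ n, α n < κ.ord := by
    intro n
    induction n with
    | zero => exact hlim.pos
    | succ n ih =>
      rw [hαsucc]
      exact hlim.succ_lt (max_lt ih (hglt n))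
  have hαmono : StrictMono α := by
    apply strictMono_nat_of_lt_succ
    intro n
    rw [hαsucc]
    exact lt_of_le_of_lt (le_max_left _ _) (Order.lt_succ _)
  have hαcof : ∀ β < κ.ord, ∃ n, β < α (n + 1) := by
    intro β hβ
    obtain ⟨n, hn⟩ := hgcof β hβ
    exact ⟨n, lt_of_le_of_lt (hn.trans (le_max_right _ _)) (Order.lt_succ _)⟩
  -- the index of the interval containing β
  set idx : Ordinal.{0} → ℕ := fun β => sInf { n | β < α (n + 1) } with hidx
  have hidx1 : ∀ β < κ.ord, β < α (idx β + 1) := by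
    intro β hβ
    exact Nat.sInf_mem (hαcof β hβ)
  -- the sets to be split
  set a : ι → Set ℕ := fun i => idx '' (𝒞 i) with ha
  have hainf : ∀ i, (a i).Infinite := by
    intro i
    apply infinite_of_unbounded_nat
    intro N
    obtain ⟨β, hβC, hβ⟩ := (hclub i).2.1 (α N) (hαlt N)
    have hβlt : β < κ.ord := (hclub i).1 hβC
    refine ⟨idx β, ⟨β, hβC, rfl⟩, ?_⟩
    by_contra hlt
    push_neg at hlt
    have h1' : α (idx β + 1) ≤ α N := hαmono.monotone hlt
    exact lt_irrefl β (lt_trans (lt_of_lt_of_le (hidx1 β hβlt) h1') hβ)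
  -- find a splitting set b
  have hsplit : ∃ b : Set ℕ, ∀ i, ((a i) ∩ b).Infinite ∧ ((a i) \ b).Infinite := by
    by_contra hcon
    push_neg at hcon
    have hmem : #(Set.range a) ∈ { c : Cardinal.{0} | ∃ A : Set (Set ℕ),
        #A = c ∧ (∀ x ∈ A, x.Infinite) ∧
        ∀ b : Set ℕ, b.Infinite → ∃ x ∈ A, (x \ b).Finite ∨ (x ∩ b).Finite } := by
      refine ⟨Set.range a, rfl, ?_, ?_⟩
      · rintro x ⟨i, rfl⟩
        exact hainf i
      · intro b hb
        obtain ⟨i, hi⟩ := hcon b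
        refine ⟨a i, ⟨i, rfl⟩, ?_⟩
        by_cases hP : (a i ∩ b).Infinite
        · exact Or.inl (hi hP)
        · exact Or.inr (Set.not_infinite.mp hP)
    have : reapingNumber ≤ #(Set.range a) := csInf_le' hmem
    exact absurd (this.trans Cardinal.mk_range_le) (not_le_of_gt hι)
  obtain ⟨b, hb⟩ := hsplit
  -- the set E
  refine ⟨{ β | β < κ.ord ∧ idx β ∈ b }, fun β hβ => hβ.1, ?_, ?_⟩
  · intro i
    have hinter : a i ∩ b ⊆ idx '' (𝒞 i ∩ { β | β < κ.ord ∧ idx β ∈ b }) := by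
      rintro n ⟨⟨β, hβC, rfl⟩, hnb⟩
      exact ⟨β, ⟨hβC, (hclub i).1 hβC, hnb⟩, rfl⟩
    have hdiff : a i \ b ⊆ idx '' (𝒞 i \ { β | β < κ.ord ∧ idx β ∈ b }) := by
      rintro n ⟨⟨β, hβC, rfl⟩, hnb⟩
      exact ⟨β, ⟨hβC, fun h => hnb h.2⟩, rfl⟩
    exact ⟨Set.Infinite.of_image _ (((hb i).1).mono hinter),
           Set.Infinite.of_image _ (((hb i).2).mono hdiff)⟩
  · intro i
    obtain ⟨β₁, hβ₁⟩ := (Set.Infinite.nonempty (Set.Infinite.of_image _ (((hb i).1).mono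
      (by
        rintro n ⟨⟨β, hβC, rfl⟩, hnb⟩
        exact ⟨β, ⟨hβC, (hclub i).1 hβC, hnb⟩, rfl⟩ :
        a i ∩ b ⊆ idx '' (𝒞 i ∩ { β | β < κ.ord ∧ idx β ∈ b })))))
    obtain ⟨β₂, hβ₂C, hβ₂E⟩ := (Set.Infinite.nonempty (Set.Infinite.of_image _ (((hb i).2).mono
      (by
        rintro n ⟨⟨β, hβC, rfl⟩, hnb⟩
        exact ⟨β, ⟨hβC, fun h => hnb h.2⟩, rfl⟩ :
        a i \ b ⊆ idx '' (𝒞 i \ { β | β < κ.ord ∧ idx β ∈ b })))))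
    exact ⟨⟨β₁, hβ₁⟩, ⟨β₂, hβ₂C, (hclub i).1 hβ₂C, hβ₂E⟩⟩
end
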